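/- (Theorem 2.2.) Let N be a natural number and let q_k ∈ ℂ[X] be given for each integer k with |k| ≤ N, and let Q = ∑_{k=0}^{N} S^k ∘ q_k(D) + ∑_{k=1}^{N} S'^k ∘ q_{−k}(D). Then Q commutes with the even Szegő projector Π_even if and only if Q lies in the ℂ-subalgebra of End(V) generated by the three operators D, D∘S² and S'²∘D (i.e. Q ∈ Algebra.adjoin ℂ {D, D∘S∘S, S'∘S'∘D}). In other words, the algebra of differential operators on S¹ commuting with Π_even is generated by (1/i)d/dθ, (1/i)(d/dθ)e^{2iθ} and e^{−2iθ}(1/i)d/dθ. -/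
import Mathlib


open Polynomial

local notation "V" => (ℤ →₀ ℂ)

/-- The operator `(1/i) d/dθ`: `D δ_m = m • δ_m`. -/
noncomputable def D : Module.End ℂ V :=
  Finsupp.lsum ℂ fun m => (m : ℂ) • Finsupp.lsingle m

/-- Multiplication by `e^{iθ}`, the up-shift: `S δ_m = δ_{m+1}`. -/
noncomputable def S : Module.End ℂ V :=
  Finsupp.lsum ℂ fun m => Finsupp.lsingle (m + 1)

/-- Multiplication by `e^{-iθ}`, the down-shift: `S' δ_m = δ_{m-1}`. -/
noncomputable def S' : Module.End ℂ V :=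
  Finsupp.lsum ℂ fun m => Finsupp.lsingle (m - 1)

/-- The even Szegő projector: `Π_even δ_m = δ_m` for `m ≥ 0` even, `Π_even δ_m = 0` otherwise. -/
noncomputable def SzegoEven : Module.End ℂ V :=
  Finsupp.lsum ℂ fun m => if 0 ≤ m ∧ Even m then Finsupp.lsingle m else 0

noncomputable def δ (m : ℤ) : V := Finsupp.single m 1

lemma D_single (m : ℤ) : D (δ m) = (m : ℂ) • δ m := by
  rw [D, δ, Finsupp.lsum_single]; rfl

lemma S_single (m : ℤ) : S (δ m) = δ (m + 1) := by
  rw [S, δ, Finsupp.lsum_single]; rfl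

lemma S'_single (m : ℤ) : S' (δ m) = δ (m - 1) := by
  rw [S', δ, Finsupp.lsum_single]; rfl

noncomputable def χ (m : ℤ) : ℂ := if 0 ≤ m ∧ Even m then 1 else 0

lemma Szego_single (m : ℤ) : SzegoEven (δ m) = χ m • δ m := by
  rw [SzegoEven, δ, Finsupp.lsum_single, χ]
  split <;> simp [δ]

lemma ext_single {f g : Module.End ℂ V} (h : ∀ m, f (δ m) = g (δ m)) : f = g := by
  apply Finsupp.lhom_ext
  intro a b
  have : (Finsupp.single a b : V) = b • δ a := by
    rw [δ, Finsupp.smul_single, smul_eq_mul, mul_one]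
  rw [this, map_smul, map_smul, h]

lemma Spow_single (k : ℕ) (m : ℤ) : (S ^ k) (δ m) = δ (m + k) := by
  induction k with
  | zero => simp [δ]
  | succ n ih => rw [pow_succ', Module.End.mul_apply, ih, S_single]; congr 1; push_cast; ring

lemma S'pow_single (k : ℕ) (m : ℤ) : (S' ^ k) (δ m) = δ (m - k) := by
  induction k with
  | zero => simp [δ]
  | succ n ih => rw [pow_succ', Module.End.mul_apply, ih, S'_single]; congr 1; push_cast; ring

lemma Dpow_single (n : ℕ) (m : ℤ) : (D ^ n) (δ m) = ((m : ℂ) ^ n) • δ m := by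
  induction n with
  | zero => simp
  | succ n ih => rw [pow_succ, Module.End.mul_apply, D_single, map_smul, ih, smul_smul,
      pow_succ, mul_comm]

lemma aevalD_single (p : ℂ[X]) (m : ℤ) :
    (Polynomial.aeval D p) (δ m) = p.eval (m : ℂ) • δ m := by
  induction p using Polynomial.induction_on' with
  | add p q hp hq => simp [hp, hq, add_smul]
  | monomial n a =>
      rw [aeval_monomial, eval_monomial, Module.End.mul_apply, Dpow_single, map_smul,
        Module.algebraMap_end_apply, smul_smul, mul_comm]

lemma A_single (m : ℤ) : (D * S * S) (δ m) = ((m : ℂ) + 2) • δ (m + 2) := by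
  rw [Module.End.mul_apply, Module.End.mul_apply, S_single, S_single, show m + 1 + 1 = m + 2 by ring,
    D_single]
  push_cast; ring_nf

lemma B_single (m : ℤ) : (S' * S' * D) (δ m) = (m : ℂ) • δ (m - 2) := by
  rw [Module.End.mul_apply, Module.End.mul_apply, D_single, map_smul, map_smul, S'_single,
    S'_single]
  congr 2; ring

lemma Apow_single (j : ℕ) (m : ℤ) :
    ((D * S * S) ^ j) (δ m) = (∏ i ∈ Finset.range j, ((m : ℂ) + 2 * (i + 1))) • δ (m + 2 * j) := by
  induction j with
  | zero => simp
  | succ n ih =>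
      rw [pow_succ', Module.End.mul_apply, ih, map_smul, A_single, Finset.prod_range_succ,
        smul_smul]
      congr 2
      · push_cast; ring
      · push_cast; ring

lemma Bpow_single (j : ℕ) (m : ℤ) :
    ((S' * S' * D) ^ j) (δ m) = (∏ i ∈ Finset.range j, ((m : ℂ) - 2 * i)) • δ (m - 2 * j) := by
  induction j with
  | zero => simp
  | succ n ih =>
      rw [pow_succ', Module.End.mul_apply, ih, map_smul, B_single, Finset.prod_range_succ,
        smul_smul]
      congr 2
      · push_cast; ring
      · push_cast; ring

noncomputable def Pp (j : ℕ) : ℂ[X] := ∏ i ∈ Finset.range j, (X + C (2 * ((i : ℂ) + 1)))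
noncomputable def Pn (j : ℕ) : ℂ[X] := ∏ i ∈ Finset.range j, (X - C (2 * (i : ℂ)))

lemma idA (j : ℕ) (s : ℂ[X]) :
    S ^ (2 * j) * Polynomial.aeval D (s * Pp j) = (D * S * S) ^ j * Polynomial.aeval D s := by
  apply ext_single; intro m
  rw [Module.End.mul_apply, Module.End.mul_apply, aevalD_single, aevalD_single, map_smul,
    map_smul, Spow_single, Apow_single, smul_smul, eval_mul, Pp, eval_prod]
  congr 2
  all_goals first
    | (apply Finset.prod_congr rfl; intros; simp)
    | (push_cast; ring)

lemma idB (j : ℕ) (s : ℂ[X]) :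
    S' ^ (2 * j) * Polynomial.aeval D (s * Pn j) = (S' * S' * D) ^ j * Polynomial.aeval D s := by
  apply ext_single; intro m
  rw [Module.End.mul_apply, Module.End.mul_apply, aevalD_single, aevalD_single, map_smul,
    map_smul, S'pow_single, Bpow_single, smul_smul, eval_mul, Pn, eval_prod]
  congr 2
  all_goals first
    | (apply Finset.prod_congr rfl; intros; simp)
    | (push_cast; ring)

lemma factor_pos (j : ℕ) (p : ℂ[X]) (h : ∀ i < j, p.eval (-(2 * ((i : ℂ) + 1))) = 0) :
    ∃ s, p = s * Pp j := by
  induction j generalizing p with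
  | zero => exact ⟨p, by simp [Pp]⟩
  | succ n ih =>
      have hroot : p.IsRoot (-(2 * ((n : ℂ) + 1))) := h n (Nat.lt_succ_self n)
      obtain ⟨t, ht⟩ := (Polynomial.dvd_iff_isRoot).2 hroot
      have ht' : p = t * (X + C (2 * ((n : ℂ) + 1))) := by
        rw [ht]; rw [mul_comm]; congr 1; rw [map_neg, sub_neg_eq_add]
      have htroots : ∀ i < n, t.eval (-(2 * ((i : ℂ) + 1))) = 0 := by
        intro i hi
        have := h i (Nat.lt_succ_of_lt hi)
        rw [ht', eval_mul, eval_add, eval_X, eval_C] at this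
        have hne : (-(2 * ((i : ℂ) + 1)) + 2 * ((n : ℂ) + 1)) ≠ 0 := by
          intro hc
          have : (i : ℂ) = (n : ℂ) := by linear_combination -hc / 2
          exact absurd (Nat.cast_injective this) hi.ne
        exact (mul_eq_zero.1 this).resolve_right hne
      obtain ⟨s, hs⟩ := ih t htroots
      exact ⟨s, by rw [ht', hs]; simp only [Pp, Finset.prod_range_succ]; ring⟩

lemma factor_neg (j : ℕ) (p : ℂ[X]) (h : ∀ i < j, p.eval (2 * (i : ℂ)) = 0) :
    ∃ s, p = s * Pn j := by
  induction j generalizing p with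
  | zero => exact ⟨p, by simp [Pn]⟩
  | succ n ih =>
      have hroot : p.IsRoot (2 * (n : ℂ)) := h n (Nat.lt_succ_self n)
      obtain ⟨t, ht⟩ := (Polynomial.dvd_iff_isRoot).2 hroot
      have ht' : p = t * (X - C (2 * (n : ℂ))) := by rw [ht, mul_comm]
      have htroots : ∀ i < n, t.eval (2 * (i : ℂ)) = 0 := by
        intro i hi
        have := h i (Nat.lt_succ_of_lt hi)
        rw [ht', eval_mul, eval_sub, eval_X, eval_C] at this
        have hne : (2 * (i : ℂ) - 2 * (n : ℂ)) ≠ 0 := by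
          intro hc
          have : (i : ℂ) = (n : ℂ) := by linear_combination hc / 2
          exact absurd (Nat.cast_injective this) hi.ne
        exact (mul_eq_zero.1 this).resolve_right hne
      obtain ⟨s, hs⟩ := ih t htroots
      exact ⟨s, by rw [ht', hs]; simp only [Pn, Finset.prod_range_succ]; ring⟩

lemma eq_zero_of_even_roots (p : ℂ[X]) (h : ∀ n : ℕ, p.eval (2 * (n : ℂ)) = 0) : p = 0 := by
  apply Polynomial.eq_zero_of_infinite_isRoot
  refine Set.infinite_of_injective_forall_mem (f := fun n : ℕ => 2 * (n : ℂ)) ?_ ?_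
  · intro a b hab
    have : (a : ℂ) = b := mul_left_cancel₀ two_ne_zero hab
    exact_mod_cast this
  · intro n; exact h n


lemma coord_pos (N : ℕ) (c d : ℕ → ℂ) (m : ℤ) (k₀ : ℕ) (hk : k₀ < N + 1) :
    (((∑ k ∈ Finset.range (N+1), c k • δ (m + k)) + ∑ k ∈ Finset.Icc 1 N, d k • δ (m - k)) : V)
      (m + (k₀ : ℤ)) = c k₀ := by
  rw [Finsupp.add_apply, Finsupp.finset_sum_apply, Finsupp.finset_sum_apply]
  have h1 : ∑ k ∈ Finset.range (N+1), (c k • δ (m + k)) (m + (k₀ : ℤ)) = c k₀ := by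
    rw [Finset.sum_eq_single k₀]
    · simp [δ, Finsupp.single_apply]
    · intro b _ hb
      have hne : m + (b : ℤ) ≠ m + (k₀ : ℤ) := by omega
      simp only [δ, Finsupp.smul_apply, Finsupp.single_apply, if_neg hne]
      simp
    · intro h; exact absurd (Finset.mem_range.2 hk) h
  have h2 : ∑ k ∈ Finset.Icc 1 N, (d k • δ (m - k)) (m + (k₀ : ℤ)) = 0 := by
    apply Finset.sum_eq_zero
    intro b hb
    have hb' := Finset.mem_Icc.1 hb
    have hne : m - (b : ℤ) ≠ m + (k₀ : ℤ) := by omega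
    simp only [δ, Finsupp.smul_apply, Finsupp.single_apply, if_neg hne]
    simp
  rw [h1, h2, add_zero]

lemma coord_neg (N : ℕ) (c d : ℕ → ℂ) (m : ℤ) (k₀ : ℕ) (hk1 : 1 ≤ k₀) (hk : k₀ ≤ N) :
    (((∑ k ∈ Finset.range (N+1), c k • δ (m + k)) + ∑ k ∈ Finset.Icc 1 N, d k • δ (m - k)) : V)
      (m - (k₀ : ℤ)) = d k₀ := by
  rw [Finsupp.add_apply, Finsupp.finset_sum_apply, Finsupp.finset_sum_apply]
  have h1 : ∑ k ∈ Finset.range (N+1), (c k • δ (m + k)) (m - (k₀ : ℤ)) = 0 := by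
    apply Finset.sum_eq_zero
    intro b hb
    have hne : m + (b : ℤ) ≠ m - (k₀ : ℤ) := by omega
    simp only [δ, Finsupp.smul_apply, Finsupp.single_apply, if_neg hne]
    simp
  have h2 : ∑ k ∈ Finset.Icc 1 N, (d k • δ (m - k)) (m - (k₀ : ℤ)) = d k₀ := by
    rw [Finset.sum_eq_single k₀]
    · simp [δ, Finsupp.single_apply]
    · intro b _ hb
      have hne : m - (b : ℤ) ≠ m - (k₀ : ℤ) := by omega
      simp only [δ, Finsupp.smul_apply, Finsupp.single_apply, if_neg hne]
      simp
    · intro h; exact absurd (Finset.mem_Icc.2 ⟨hk1, hk⟩) h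
  rw [h1, h2, zero_add]

lemma χ_one {m : ℤ} (h : 0 ≤ m) (h2 : m % 2 = 0) : χ m = 1 := by
  simp [χ, Int.even_iff, h, h2]

lemma χ_zero {m : ℤ} (h : ¬(0 ≤ m ∧ m % 2 = 0)) : χ m = 0 := by
  simp only [χ, Int.even_iff, ite_eq_right_iff]
  intro hc; exact absurd ⟨hc.1, hc.2⟩ h

lemma comm_D : SzegoEven * D = D * SzegoEven := by
  apply ext_single; intro m
  rw [Module.End.mul_apply, Module.End.mul_apply, D_single, Szego_single, map_smul, map_smul,
    Szego_single, D_single, smul_smul, smul_smul, mul_comm]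

lemma comm_A : SzegoEven * (D * S * S) = (D * S * S) * SzegoEven := by
  apply ext_single; intro m
  show SzegoEven ((D * S * S) (δ m)) = (D * S * S) (SzegoEven (δ m))
  rw [A_single, Szego_single, map_smul, map_smul,
    Szego_single, A_single, smul_smul, smul_smul]
  by_cases hm : m = -2
  · subst hm; norm_num
  · congr 1
    rw [mul_comm]
    congr 1
    unfold χ
    simp only [Int.even_iff]
    split_ifs with h1 h2 h2 <;> first | rfl | omega

lemma comm_B : SzegoEven * (S' * S' * D) = (S' * S' * D) * SzegoEven := by
  apply ext_single; intro m
  show SzegoEven ((S' * S' * D) (δ m)) = (S' * S' * D) (SzegoEven (δ m))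
  rw [B_single, Szego_single, map_smul, map_smul,
    Szego_single, B_single, smul_smul, smul_smul]
  by_cases hm : m = 0
  · subst hm; norm_num
  · congr 1
    rw [mul_comm]
    congr 1
    unfold χ
    simp only [Int.even_iff]
    split_ifs with h1 h2 h2 <;> first | rfl | omega

/-- Theorem 2.2: a differential operator
`Q = ∑_{k=0}^N S^k ∘ q_k(D) + ∑_{k=1}^N S'^k ∘ q_{-k}(D)` on `S¹` commutes with the even
Szegő projector `Π_even` iff it lies in the algebra generated by `(1/i)d/dθ`,
`(1/i)(d/dθ)e^{2iθ}` and `e^{-2iθ}(1/i)d/dθ`, i.e. by `D`, `D∘S²` and `S'²∘D`. -/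
theorem statement6 (N : ℕ) (q : ℤ → ℂ[X]) (Q : Module.End ℂ V)
    (hQ : Q = ∑ k ∈ Finset.range (N + 1), S ^ k * Polynomial.aeval D (q (k : ℤ))
        + ∑ k ∈ Finset.Icc 1 N, S' ^ k * Polynomial.aeval D (q (-(k : ℤ)))) :
    Commute Q SzegoEven ↔
      Q ∈ Algebra.adjoin ℂ ({D, D * S * S, S' * S' * D} : Set (Module.End ℂ V)) := by
  constructor
  · intro hcomm
    have hc : Q * SzegoEven = SzegoEven * Q := hcomm
    have Qδ : ∀ m : ℤ, Q (δ m)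
        = (∑ k ∈ Finset.range (N+1), (q (k : ℤ)).eval (m : ℂ) • δ (m + k))
          + ∑ k ∈ Finset.Icc 1 N, (q (-(k : ℤ))).eval (m : ℂ) • δ (m - k) := by
      intro m
      rw [hQ, LinearMap.add_apply, LinearMap.sum_apply, LinearMap.sum_apply]
      congr 1
      · refine Finset.sum_congr rfl fun k _ => ?_
        rw [Module.End.mul_apply, aevalD_single, map_smul, Spow_single]
      · refine Finset.sum_congr rfl fun k _ => ?_
        rw [Module.End.mul_apply, aevalD_single, map_smul, S'pow_single]
    have key : ∀ m : ℤ, SzegoEven (Q (δ m)) = χ m • Q (δ m) := by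
      intro m
      have h := DFunLike.congr_fun hc (δ m)
      rw [Module.End.mul_apply, Module.End.mul_apply, Szego_single, map_smul] at h
      exact h.symm
    have hSz : ∀ m : ℤ, SzegoEven (Q (δ m))
        = (∑ k ∈ Finset.range (N+1), ((q (k : ℤ)).eval (m:ℂ) * χ (m + k)) • δ (m + k))
          + ∑ k ∈ Finset.Icc 1 N, ((q (-(k : ℤ))).eval (m:ℂ) * χ (m - k)) • δ (m - k) := by
      intro m
      rw [Qδ m, map_add, map_sum, map_sum]
      congr 1
      · refine Finset.sum_congr rfl fun k _ => ?_
        rw [map_smul, Szego_single, smul_smul]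
      · refine Finset.sum_congr rfl fun k _ => ?_
        rw [map_smul, Szego_single, smul_smul]
    have pos : ∀ k₀ : ℕ, k₀ < N + 1 → ∀ m : ℤ,
        (q (k₀ : ℤ)).eval (m:ℂ) * χ (m + k₀) = χ m * (q (k₀ : ℤ)).eval (m:ℂ) := by
      intro k₀ hk₀ m
      have hL := coord_pos N (fun k => (q (k:ℤ)).eval (m:ℂ) * χ (m + k))
        (fun k => (q (-(k:ℤ))).eval (m:ℂ) * χ (m - k)) m k₀ hk₀
      have hR := coord_pos N (fun k => (q (k:ℤ)).eval (m:ℂ))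
        (fun k => (q (-(k:ℤ))).eval (m:ℂ)) m k₀ hk₀
      have e1 : (Q (δ m)) (m + (k₀:ℤ)) = (q (k₀:ℤ)).eval (m:ℂ) := by rw [Qδ m]; exact hR
      have e2 : (SzegoEven (Q (δ m))) (m + (k₀:ℤ))
          = (q (k₀:ℤ)).eval (m:ℂ) * χ (m + k₀) := by rw [hSz m]; exact hL
      calc (q (k₀:ℤ)).eval (m:ℂ) * χ (m + k₀)
          = (SzegoEven (Q (δ m))) (m + (k₀:ℤ)) := e2.symm
        _ = (χ m • Q (δ m)) (m + (k₀:ℤ)) := by rw [key m]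
        _ = χ m * (q (k₀:ℤ)).eval (m:ℂ) := by rw [Finsupp.smul_apply, e1, smul_eq_mul]
    have neg : ∀ k₀ : ℕ, 1 ≤ k₀ → k₀ ≤ N → ∀ m : ℤ,
        (q (-(k₀ : ℤ))).eval (m:ℂ) * χ (m - k₀) = χ m * (q (-(k₀ : ℤ))).eval (m:ℂ) := by
      intro k₀ hk₁ hk₀ m
      have hL := coord_neg N (fun k => (q (k:ℤ)).eval (m:ℂ) * χ (m + k))
        (fun k => (q (-(k:ℤ))).eval (m:ℂ) * χ (m - k)) m k₀ hk₁ hk₀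
      have hR := coord_neg N (fun k => (q (k:ℤ)).eval (m:ℂ))
        (fun k => (q (-(k:ℤ))).eval (m:ℂ)) m k₀ hk₁ hk₀
      have e1 : (Q (δ m)) (m - (k₀:ℤ)) = (q (-(k₀:ℤ))).eval (m:ℂ) := by rw [Qδ m]; exact hR
      have e2 : (SzegoEven (Q (δ m))) (m - (k₀:ℤ))
          = (q (-(k₀:ℤ))).eval (m:ℂ) * χ (m - k₀) := by rw [hSz m]; exact hL
      calc (q (-(k₀:ℤ))).eval (m:ℂ) * χ (m - k₀)
          = (SzegoEven (Q (δ m))) (m - (k₀:ℤ)) := e2.symm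
        _ = (χ m • Q (δ m)) (m - (k₀:ℤ)) := by rw [key m]
        _ = χ m * (q (-(k₀:ℤ))).eval (m:ℂ) := by rw [Finsupp.smul_apply, e1, smul_eq_mul]
    rw [hQ]
    apply add_mem
    · apply Subalgebra.sum_mem
      intro k hk
      have hkN : k < N + 1 := Finset.mem_range.1 hk
      rcases Nat.even_or_odd k with he | ho
      · obtain ⟨j, hj⟩ := he
        have hk2 : k = 2 * j := by omega
        have hroots : ∀ i < j, (q (k:ℤ)).eval (-(2 * ((i:ℂ) + 1))) = 0 := by
          intro i hi
          have h := pos k hkN (-(2 * ((i:ℤ) + 1)))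
          have hχ1 : χ (-(2 * ((i:ℤ) + 1))) = 0 := χ_zero (by omega)
          have hχ2 : χ (-(2 * ((i:ℤ) + 1)) + (k:ℤ)) = 1 := χ_one (by omega) (by omega)
          rw [hχ1, hχ2, zero_mul, mul_one] at h
          have hcast : ((-(2 * ((i:ℤ) + 1)) : ℤ) : ℂ) = -(2 * ((i:ℂ) + 1)) := by
            push_cast; ring
          rw [← hcast]; exact h
        obtain ⟨s, hs⟩ := factor_pos j (q (k:ℤ)) hroots
        rw [hs, hk2, idA]
        exact mul_mem (pow_mem (Algebra.subset_adjoin (by simp)) j)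
          ((Algebra.adjoin_mono (by simp)) (Polynomial.aeval_mem_adjoin_singleton ℂ D))
      · have hq0 : q (k:ℤ) = 0 := by
          apply eq_zero_of_even_roots
          intro n
          obtain ⟨r, hr⟩ := ho
          have h := pos k hkN (2 * (n:ℤ))
          have hχ1 : χ (2 * (n:ℤ)) = 1 := χ_one (by omega) (by omega)
          have hχ2 : χ (2 * (n:ℤ) + (k:ℤ)) = 0 := χ_zero (by omega)
          rw [hχ1, hχ2, mul_zero, one_mul] at h
          have hcast : ((2 * (n:ℤ) : ℤ) : ℂ) = 2 * (n:ℂ) := by push_cast; ring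
          rw [← hcast]; exact h.symm
        rw [hq0]
        simp only [map_zero, mul_zero]
        exact zero_mem _
    · apply Subalgebra.sum_mem
      intro k hk
      obtain ⟨hk1, hkN⟩ := Finset.mem_Icc.1 hk
      rcases Nat.even_or_odd k with he | ho
      · obtain ⟨j, hj⟩ := he
        have hk2 : k = 2 * j := by omega
        have hroots : ∀ i < j, (q (-(k:ℤ))).eval (2 * (i:ℂ)) = 0 := by
          intro i hi
          have h := neg k hk1 hkN (2 * (i:ℤ))
          have hχ1 : χ (2 * (i:ℤ)) = 1 := χ_one (by omega) (by omega)
          have hχ2 : χ (2 * (i:ℤ) - (k:ℤ)) = 0 := χ_zero (by omega)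
          rw [hχ1, hχ2, mul_zero, one_mul] at h
          have hcast : ((2 * (i:ℤ) : ℤ) : ℂ) = 2 * (i:ℂ) := by push_cast; ring
          rw [← hcast]; exact h.symm
        obtain ⟨s, hs⟩ := factor_neg j (q (-(k:ℤ))) hroots
        rw [hs, hk2, idB]
        exact mul_mem (pow_mem (Algebra.subset_adjoin (by simp)) j)
          ((Algebra.adjoin_mono (by simp)) (Polynomial.aeval_mem_adjoin_singleton ℂ D))
      · have hq0 : q (-(k:ℤ)) = 0 := by
          apply eq_zero_of_even_roots
          intro n
          obtain ⟨r, hr⟩ := ho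
          have h := neg k hk1 hkN (2 * (n:ℤ))
          have hχ1 : χ (2 * (n:ℤ)) = 1 := χ_one (by omega) (by omega)
          have hχ2 : χ (2 * (n:ℤ) - (k:ℤ)) = 0 := χ_zero (by omega)
          rw [hχ1, hχ2, mul_zero, one_mul] at h
          have hcast : ((2 * (n:ℤ) : ℤ) : ℂ) = 2 * (n:ℂ) := by push_cast; ring
          rw [← hcast]; exact h.symm
        rw [hq0]
        simp only [map_zero, mul_zero]
        exact zero_mem _
  · intro hmem
    have hle : Algebra.adjoin ℂ ({D, D * S * S, S' * S' * D} : Set (Module.End ℂ V))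
        ≤ Subalgebra.centralizer ℂ {SzegoEven} := by
      rw [Algebra.adjoin_le_iff]
      rintro x hx
      simp only [Set.mem_insert_iff, Set.mem_singleton_iff] at hx
      rw [SetLike.mem_coe, Subalgebra.mem_centralizer_iff]
      rintro g hg
      rw [Set.mem_singleton_iff] at hg
      subst hg
      rcases hx with rfl | rfl | rfl
      · exact comm_D
      · exact comm_A
      · exact comm_B
    have hcen := hle hmem
    rw [Subalgebra.mem_centralizer_iff] at hcen
    exact (hcen SzegoEven (Set.mem_singleton _)).symm
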